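/- Let B be a finite Blaschke product and let w ∈ ℂ with w ≠ 0, w not a pole of B, and B(w) ≠ 0 (so that 1/conj(w) is also neither a zero nor a pole of B). Then B'(w) = 0 if and only if B'(1/conj(w)) = 0. -/

import Mathlib

open Complex ComplexConjugate

/-! The logarithmic derivative of a Blaschke factor `(a - ζ) / (1 - conj a * ζ)` is
`(|a|² - 1) / ((a - ζ) (1 - conj a * ζ))`. Under the reflection `w ↦ 1 / conj w` the
denominator becomes its own conjugate divided by `conj w ^ 2`, while the real numerator is
unchanged, so `(B'/B)(1 / conj w) = conj w ^ 2 * conj ((B'/B)(w))`. Away from zeros of `B`,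
`B'` vanishes exactly where `B'/B` does. -/

noncomputable def blaschkeFactor (a ζ : ℂ) : ℂ := (a - ζ) / (1 - conj a * ζ)

/-- With `x / 0 = 0`, a nonzero value also rules out a pole. -/
lemma blaschkeFactor_ne_zero_iff {a ζ : ℂ} :
    blaschkeFactor a ζ ≠ 0 ↔ a - ζ ≠ 0 ∧ 1 - conj a * ζ ≠ 0 :=
  div_ne_zero_iff

lemma blaschkeFactor_inv_conj (a : ℂ) {w : ℂ} (hw : w ≠ 0) :
    blaschkeFactor a (conj w)⁻¹ = (conj (blaschkeFactor a w))⁻¹ := by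
  have hcw : conj w ≠ 0 := (map_ne_zero _).2 hw
  simp only [blaschkeFactor, map_div₀, map_sub, map_mul, map_one, conj_conj, inv_div]
  rw [← mul_div_mul_right _ _ (neg_ne_zero.2 hcw)]
  congr 1 <;> field_simp <;> ring

lemma hasDerivAt_blaschkeFactor (a : ℂ) {x : ℂ} (hx : 1 - conj a * x ≠ 0) :
    HasDerivAt (blaschkeFactor a) ((conj a * a - 1) / (1 - conj a * x) ^ 2) x := by
  have hnum : HasDerivAt (fun ζ : ℂ => a - ζ) (-1) x := by
    simpa using (hasDerivAt_id x).const_sub a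
  have hden : HasDerivAt (fun ζ : ℂ => 1 - conj a * ζ) (-conj a) x := by
    simpa using ((hasDerivAt_id x).const_mul (conj a)).const_sub 1
  exact (hnum.div hden hx).congr_deriv (by ring)

lemma logDeriv_blaschkeFactor {a x : ℂ} (hx : blaschkeFactor a x ≠ 0) :
    logDeriv (blaschkeFactor a) x = (conj a * a - 1) / ((a - x) * (1 - conj a * x)) := by
  obtain ⟨hzero, hpole⟩ := blaschkeFactor_ne_zero_iff.1 hx
  rw [logDeriv_apply, (hasDerivAt_blaschkeFactor a hpole).deriv, blaschkeFactor]
  field_simp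

lemma logDeriv_blaschkeFactor_inv_conj (a : ℂ) {w : ℂ} (hw : w ≠ 0)
    (ha : blaschkeFactor a w ≠ 0) :
    logDeriv (blaschkeFactor a) (conj w)⁻¹ = conj w ^ 2 * conj (logDeriv (blaschkeFactor a) w) := by
  have hcw : conj w ≠ 0 := (map_ne_zero _).2 hw
  have ha' : blaschkeFactor a (conj w)⁻¹ ≠ 0 := by
    rw [blaschkeFactor_inv_conj a hw]
    exact inv_ne_zero ((map_ne_zero _).2 ha)
  have hden : (a - (conj w)⁻¹) * (1 - conj a * (conj w)⁻¹)
      = conj ((a - w) * (1 - conj a * w)) / conj w ^ 2 := by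
    simp only [map_mul, map_sub, map_one, conj_conj]
    field_simp
    ring
  rw [logDeriv_blaschkeFactor ha', logDeriv_blaschkeFactor ha, hden, div_div_eq_mul_div,
    map_div₀]
  simp only [map_sub, map_mul, map_one, conj_conj]
  ring

lemma logDeriv_const_mul_prod_blaschkeFactor_inv_conj {ι : Type*} [Fintype ι] {c : ℂ}
    (hc : c ≠ 0) (z : ι → ℂ) {w : ℂ} (hw : w ≠ 0) (hz : ∀ k, blaschkeFactor (z k) w ≠ 0) :
    logDeriv (fun ζ => c * ∏ k, blaschkeFactor (z k) ζ) (conj w)⁻¹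
      = conj w ^ 2 * conj (logDeriv (fun ζ => c * ∏ k, blaschkeFactor (z k) ζ) w) := by
  have hz' : ∀ k, blaschkeFactor (z k) (conj w)⁻¹ ≠ 0 := fun k => by
    rw [blaschkeFactor_inv_conj _ hw]
    exact inv_ne_zero ((map_ne_zero _).2 (hz k))
  have hdiff : ∀ x, (∀ k, blaschkeFactor (z k) x ≠ 0) →
      ∀ k ∈ Finset.univ, DifferentiableAt ℂ (blaschkeFactor (z k)) x := fun x hx k _ =>
    (hasDerivAt_blaschkeFactor _ (blaschkeFactor_ne_zero_iff.1 (hx k)).2).differentiableAt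
  rw [logDeriv_const_mul _ _ hc, logDeriv_const_mul _ _ hc,
    logDeriv_prod (fun k _ => hz' k) (hdiff _ hz'), logDeriv_prod (fun k _ => hz k) (hdiff _ hz),
    map_sum, Finset.mul_sum]
  exact Finset.sum_congr rfl fun k _ => logDeriv_blaschkeFactor_inv_conj _ hw (hz k)

lemma deriv_eq_zero_iff_logDeriv_eq_zero {f : ℂ → ℂ} {x : ℂ} (hf : f x ≠ 0) :
    deriv f x = 0 ↔ logDeriv f x = 0 := by
  rw [logDeriv_apply, div_eq_zero_iff, or_iff_left hf]

theorem blaschke_deriv_symmetric_zeros_general (n : ℕ) (α : ℝ) (z : Fin n → ℂ)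
    (B : ℂ → ℂ)
    (hB : B = fun ζ => Complex.exp (α * Complex.I) * ∏ k, (z k - ζ) / (1 - conj (z k) * ζ))
    (w : ℂ) (hw0 : w ≠ 0) (hwzero : B w ≠ 0) :
    deriv B w = 0 ↔ deriv B (conj w)⁻¹ = 0 := by
  replace hB : B = fun ζ => Complex.exp (α * Complex.I) * ∏ k, blaschkeFactor (z k) ζ := hB
  have hc : Complex.exp (α * Complex.I) ≠ 0 := Complex.exp_ne_zero _
  have hz : ∀ k, blaschkeFactor (z k) w ≠ 0 := by
    subst hB
    exact fun k => Finset.prod_ne_zero_iff.1 (right_ne_zero_of_mul hwzero) k (Finset.mem_univ k)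
  have hBinv : B (conj w)⁻¹ ≠ 0 := by
    subst hB
    simp only [blaschkeFactor_inv_conj _ hw0, Finset.prod_inv_distrib, ← map_prod]
    exact mul_ne_zero hc (inv_ne_zero ((map_ne_zero _).2 (right_ne_zero_of_mul hwzero)))
  rw [deriv_eq_zero_iff_logDeriv_eq_zero hwzero, deriv_eq_zero_iff_logDeriv_eq_zero hBinv, hB,
    logDeriv_const_mul_prod_blaschkeFactor_inv_conj hc z hw0 hz]
  simp [hw0]

/-- Let `B` be a finite Blaschke product and let `w ∈ ℂ` with `w ≠ 0`, `w` not a pole of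
`B`, and `B(w) ≠ 0`.  Then `B'(w) = 0` if and only if `B'(1/conj(w)) = 0`. -/
theorem blaschke_deriv_symmetric_zeros (n : ℕ) (α : ℝ) (z : Fin n → ℂ)
    (hz : ∀ k, ‖z k‖ < 1) (B : ℂ → ℂ)
    (hB : B = fun ζ => Complex.exp (α * Complex.I) * ∏ k, (z k - ζ) / (1 - conj (z k) * ζ))
    (w : ℂ) (hw0 : w ≠ 0) (hwpole : ∀ k, 1 - conj (z k) * w ≠ 0) (hwzero : B w ≠ 0) :
    deriv B w = 0 ↔ deriv B (conj w)⁻¹ = 0 :=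
  blaschke_deriv_symmetric_zeros_general n α z B hB w hw0 hwzero
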